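/- Let O = {o1, o2, o3, o4} with A = {a1, a2}, and define the rule φ that assigns a1 her most-preferred object and assigns a2 her most-preferred object among the two objects least-preferred by a1. Then φ does not satisfy monotonic discoverability. -/

import Mathlib

open Classical

/-- `P'` is a continuation profile of `P` at allocation `μ` (i.e. `P' ∈ L(P, μ)`). -/
def InLowerContour {A O : Type*} (P : A → LinearOrder O) (μ : A → O)
    (P' : A → LinearOrder O) : Prop :=
  ∀ a : A, ∀ o o' : O, (P a).le (μ a) o → ((P a).lt o' o ↔ (P' a).lt o' o)

/-- Monotonic discoverability of a rule. -/
def MonotonicDiscoverability {A O : Type*} (φ : (A → LinearOrder O) → A → O) : Prop :=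
  ∀ (μ : A → O) (P : A → LinearOrder O),
    φ P = μ ∨ ∃ a : A, ∀ P' : A → LinearOrder O, InLowerContour P μ P' → φ P' a ≠ μ a

/-- The maximum of `s` under the linear order `L` (an arbitrary default if `s = ∅`). -/
noncomputable def topOf {α : Type*} (L : LinearOrder α) (s : Finset α) (d : α) : α :=
  WithBot.unbotD d (@Finset.max α L s)

/-- The two least-preferred objects under `L`. -/
noncomputable def bottomTwo (L : LinearOrder (Fin 4)) : Finset (Fin 4) :=
  Finset.univ.filter fun o => 2 ≤ (Finset.univ.filter fun o' => L.lt o o').card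

/-- `a1` gets her most-preferred object; `a2` gets her most-preferred object
among the two objects least-preferred by `a1`. -/
noncomputable def phiTwo (P : Fin 2 → LinearOrder (Fin 4)) : Fin 2 → Fin 4 := fun a =>
  if a = 0 then topOf (P 0) Finset.univ 0
  else topOf (P 1) (bottomTwo (P 0)) 0

/-! Let both agents rank the objects `3 > 2 > 1 > 0`. Then `φ(P) = (3, 1)`; take `μ = (3, 2)`.
Agent `a1` receives `μ a1 = 3` at `P` itself. Since `3` is `a1`'s top object, `L(P, μ)` only
asks her to keep `3` on top, so she may report `3 > 1 > 0 > 2`; her bottom two become `{0, 2}`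
and `a2` receives `μ a2 = 2`. Thus no agent's assignment under `μ` is ruled out on `L(P, μ)`,
although `φ(P) ≠ μ`. -/

theorem topOf_eq_of_forall_le {α : Type*} (L : LinearOrder α) {s : Finset α} {o : α} (d : α)
    (ho : o ∈ s) (h : ∀ x ∈ s, L.le x o) : topOf L s d = o := by
  let _ := L
  have hmax : s.max = o :=
    le_antisymm (Finset.max_le fun x hx => WithBot.coe_le_coe.2 (h x hx)) (Finset.le_max ho)
  simp [topOf, hmax]

section LowerContour

variable {A O : Type*} {P P' : A → LinearOrder O} {μ : A → O}

theorem inLowerContour_refl : InLowerContour P μ P :=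
  fun _ _ _ _ => Iff.rfl

theorem inLowerContour_of_forall_eq_or_top
    (h : ∀ a, P' a = P a ∨ (∀ o, (P a).le o (μ a)) ∧ (∀ o, (P' a).le o (μ a))) :
    InLowerContour P μ P' := by
  intro a o o' hle
  rcases h a with hP | ⟨htop, htop'⟩
  · rw [hP]
  · have ho : o = μ a := (P a).le_antisymm o (μ a) (htop o) hle
    subst ho
    have lt_top_iff (L : LinearOrder O) (hL : ∀ o, L.le o (μ a)) :
        L.lt o' (μ a) ↔ o' ≠ μ a := by
      let _ := L
      exact ⟨ne_of_lt, lt_of_le_of_ne (hL o')⟩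
    rw [lt_top_iff _ htop, lt_top_iff _ htop']

end LowerContour

theorem not_monotonicDiscoverability_of_forall_exists {A O : Type*}
    {φ : (A → LinearOrder O) → A → O}
    (μ : A → O) (P : A → LinearOrder O) (hne : φ P ≠ μ)
    (hreach : ∀ a, ∃ P', InLowerContour P μ P' ∧ φ P' a = μ a) :
    ¬ MonotonicDiscoverability φ := by
  intro hMD
  rcases hMD μ P with heq | ⟨a, ha⟩
  · exact hne heq
  · obtain ⟨P', hP', hP'a⟩ := hreach a
    exact ha P' hP' hP'a

/-- Objects are ranked by their index: `o4 > o3 > o2 > o1` is `3 > 2 > 1 > 0`. -/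
noncomputable abbrev truthfulProfile : Fin 2 → LinearOrder (Fin 4) := fun _ => inferInstance

/-- The order `3 > 1 > 0 > 2`: it keeps `3` on top but moves `2` into the bottom two. -/
noncomputable abbrev deviantOrder : LinearOrder (Fin 4) :=
  LinearOrder.lift' ![1, 2, 0, 3] (by decide)

noncomputable abbrev deviantProfile : Fin 2 → LinearOrder (Fin 4) := fun a =>
  if a = 0 then deviantOrder else inferInstance

theorem phiTwo_truthfulProfile : phiTwo truthfulProfile = ![3, 1] := by
  funext a
  fin_cases a
  · exact topOf_eq_of_forall_le _ 0 (Finset.mem_univ _) (fun x _ => Fin.le_last x)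
  · simp only [phiTwo, truthfulProfile]
    exact topOf_eq_of_forall_le _ _ (by decide) (by decide)

theorem phiTwo_deviantProfile_one : phiTwo deviantProfile 1 = 2 := by
  simp only [phiTwo, deviantProfile]
  exact topOf_eq_of_forall_le _ _ (by decide) (by decide)

theorem deviantProfile_inLowerContour : InLowerContour truthfulProfile ![3, 2] deviantProfile := by
  refine inLowerContour_of_forall_eq_or_top fun a => ?_
  fin_cases a
  · have htop : ∀ o, deviantOrder.le o 3 := by decide
    exact Or.inr ⟨fun o => Fin.le_last o, htop⟩
  · exact Or.inl rfl

/-- The rule `φ` does not satisfy monotonic discoverability. -/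
theorem phiTwo_not_monotonicDiscoverability : ¬ MonotonicDiscoverability phiTwo := by
  refine not_monotonicDiscoverability_of_forall_exists ![3, 2] truthfulProfile ?_ fun a => ?_
  · rw [phiTwo_truthfulProfile]
    decide
  · fin_cases a
    · exact ⟨truthfulProfile, inLowerContour_refl, by rw [phiTwo_truthfulProfile]; rfl⟩
    · exact ⟨deviantProfile, deviantProfile_inLowerContour, phiTwo_deviantProfile_one⟩
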